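/- In the group ring K[F] of Thompson's group F over a field K, the elements u_0 = (1 + x_0 - x_1)(1 - x_3) and v_0 = 1 - x_3 - x_0^2 + x_0 x_1 satisfy (1 - x_0) u_0 = (1 - x_1) v_0. -/

import Mathlib

/-- The defining relation of Thompson's monoid: `x_j x_i = x_i x_{j+1}` for `i < j`. -/
def thompsonRel : FreeMonoid ℕ → FreeMonoid ℕ → Prop := fun a b =>
  ∃ i j : ℕ, i < j ∧ a = FreeMonoid.of j * FreeMonoid.of i ∧
    b = FreeMonoid.of i * FreeMonoid.of (j + 1)

/-- The congruence on the free monoid generated by the Thompson relations. -/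
def thompsonCon : Con (FreeMonoid ℕ) := conGen thompsonRel

/-- Thompson's monoid `M`. -/
abbrev ThompsonM := thompsonCon.Quotient

/-- The generators `x_n` of Thompson's monoid. -/
def xM (n : ℕ) : ThompsonM := thompsonCon.mk' (FreeMonoid.of n)

/-- The shift endomorphism `φ : M → M`, `x_i ↦ x_{i+1}`. -/
def shiftM : ThompsonM →* ThompsonM :=
  Con.lift _ ((Con.mk' thompsonCon).comp (FreeMonoid.map Nat.succ)) (by
    apply Con.conGen_le.2
    rintro a b ⟨i, j, hij, rfl, rfl⟩
    simp only [Con.ker_rel, MonoidHom.comp_apply, map_mul, FreeMonoid.map_of]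
    exact Con.eq _ |>.2 (ConGen.Rel.of _ _ ⟨i + 1, j + 1, by omega, rfl, rfl⟩))

/-- The relators of Thompson's group `F` (infinite presentation). -/
def thompsonRels : Set (FreeGroup ℕ) :=
  {w | ∃ i j : ℕ, i < j ∧
    w = FreeGroup.of j * FreeGroup.of i * (FreeGroup.of i * FreeGroup.of (j + 1))⁻¹}

/-- Thompson's group `F`. -/
abbrev ThompsonF := PresentedGroup thompsonRels

/-- The generators `x_n` of Thompson's group. -/
def xF (n : ℕ) : ThompsonF := PresentedGroup.of n

/-- Word length, as a monoid homomorphism on the free monoid. -/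
def lenHom : FreeMonoid ℕ →* Multiplicative ℕ where
  toFun w := Multiplicative.ofAdd w.length
  map_one' := by simp
  map_mul' a b := by
    simp [FreeMonoid.length_mul, ofAdd_add]

/-- Length is well defined on Thompson's monoid. -/
def lenM : ThompsonM →* Multiplicative ℕ :=
  Con.lift _ lenHom (by
    apply Con.conGen_le.2
    rintro a b ⟨i, j, hij, rfl, rfl⟩
    simp only [Con.ker_rel, map_mul]
    rfl)

/-- The length of an element of Thompson's monoid. -/
def mlen (g : ThompsonM) : ℕ := Multiplicative.toAdd (lenM g)

/-- The degree of an element of the monoid ring `K[M]`. -/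
noncomputable def mdeg {K : Type*} [Field K] (a : MonoidAlgebra K ThompsonM) : ℕ :=
  a.coeff.support.sup mlen

/-- The submonoid `M_i` of `M` generated by `x_i, x_{i+1}, …`. -/
def Msub (i : ℕ) : Submonoid ThompsonM :=
  Submonoid.closure {g | ∃ n : ℕ, i ≤ n ∧ g = xM n}

/-- The shift endomorphism of the monoid ring `K[M]` induced by `φ`. -/
noncomputable def shiftA (K : Type*) [Field K] :
    MonoidAlgebra K ThompsonM →+* MonoidAlgebra K ThompsonM :=
  MonoidAlgebra.mapDomainRingHom K shiftM

/-- The natural homomorphism of Thompson's monoid into Thompson's group. -/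
def iotaMF : ThompsonM →* ThompsonF :=
  Con.lift _ (FreeMonoid.lift xF) (by
    apply Con.conGen_le.2
    rintro a b ⟨i, j, hij, rfl, rfl⟩
    simp only [Con.ker_rel, map_mul, FreeMonoid.lift_eval_of]
    have h : (FreeGroup.of j * FreeGroup.of i *
        (FreeGroup.of i * FreeGroup.of (j + 1))⁻¹ : FreeGroup ℕ) ∈ thompsonRels :=
      ⟨i, j, hij, rfl⟩
    have h1 : PresentedGroup.mk thompsonRels
        (FreeGroup.of j * FreeGroup.of i * (FreeGroup.of i * FreeGroup.of (j + 1))⁻¹) = 1 := by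
      exact (QuotientGroup.eq_one_iff _).2 (Subgroup.subset_normalClosure h)
    have := h1
    rw [map_mul, map_mul, map_inv, map_mul, mul_inv_eq_one] at this
    simpa [xF, PresentedGroup.of] using this)

/-- The generator `x_n` as an element of the group ring `K[F]`. -/
noncomputable def XF (K : Type*) [Field K] (n : ℕ) : MonoidAlgebra K ThompsonF :=
  MonoidAlgebra.of K ThompsonF (xF n)

/-- The generator `x_n` as an element of the monoid ring `K[M]`. -/
noncomputable def XMa (K : Type*) [Field K] (n : ℕ) : MonoidAlgebra K ThompsonM :=
  MonoidAlgebra.of K ThompsonM (xM n)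

/-! Expanding both sides, the identity reduces to `x₁ x₀² = x₀² x₃` and `x₁ (x₀ x₁) = (x₀ x₁) x₃`:
both `x₀²` and `x₀ x₁` conjugate `x₃` to `x₁`, which follows from the relations
`x₁ x₀ = x₀ x₂`, `x₂ x₀ = x₀ x₃` and `x₂ x₁ = x₁ x₃`. -/

lemma one_sub_mul_eq_one_sub_mul_of_semiconjBy {R : Type*} [Ring R] {a b c : R}
    (h₁ : SemiconjBy (a * a) c b) (h₂ : SemiconjBy (a * b) c b) :
    (1 - a) * ((1 + a - b) * (1 - c)) = (1 - b) * (1 - c - a ^ 2 + a * b) := by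
  rw [← sub_eq_zero]
  calc _ = (a * a * c - b * (a * a)) - (a * b * c - b * (a * b)) := by noncomm_ring
    _ = 0 := by rw [h₁.eq, h₂.eq, sub_self, sub_self, sub_zero]

lemma semiconjBy_xF {i j : ℕ} (hij : i < j) : SemiconjBy (xF i) (xF (j + 1)) (xF j) := by
  have h := (PresentedGroup.mk_eq_mk_of_mul_inv_mem (rels := thompsonRels) ⟨i, j, hij, rfl⟩).symm
  rwa [map_mul, map_mul] at h

lemma semiconjBy_XF (K : Type*) [Field K] {i j : ℕ} (hij : i < j) :
    SemiconjBy (XF K i) (XF K (j + 1)) (XF K j) :=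
  (semiconjBy_xF hij).map (MonoidAlgebra.of K ThompsonF)

/-- in `K[F]`, with `u_0 = (1 + x_0 - x_1)(1 - x_3)` and
`v_0 = 1 - x_3 - x_0² + x_0 x_1`, one has `(1 - x_0) u_0 = (1 - x_1) v_0`. -/
theorem stmt6 (K : Type*) [Field K] :
    (1 - XF K 0) * ((1 + XF K 0 - XF K 1) * (1 - XF K 3)) =
      (1 - XF K 1) * (1 - XF K 3 - XF K 0 ^ 2 + XF K 0 * XF K 1) := by
  have h₁₀ : SemiconjBy (XF K 0) (XF K 2) (XF K 1) := semiconjBy_XF K (by norm_num)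
  have h₂₀ : SemiconjBy (XF K 0) (XF K 3) (XF K 2) := semiconjBy_XF K (by norm_num)
  have h₂₁ : SemiconjBy (XF K 1) (XF K 3) (XF K 2) := semiconjBy_XF K (by norm_num)
  exact one_sub_mul_eq_one_sub_mul_of_semiconjBy (h₁₀.mul_left h₂₀) (h₁₀.mul_left h₂₁)
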